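/- arXiv:1312.4023 — 4 statements merged into one kernel-verified Lean document; each statement's English description precedes it below -/
import Mathlib

section
/- Let M be a right R-module and m ∈ M. Then the cyclic submodule mR is not δ-small in M if and only if there exists a maximal submodule N of M such that m ∉ N and M/N is singular. -/
/-- A submodule `K` of `M` is *essential* in `M` if it has nonzero intersection with
every nonzero submodule of `M`. -/
def IsEssentialSubmodule {R M : Type*} [Ring R] [AddCommGroup M] [Module R M]
    (K : Submodule R M) : Prop :=
  ∀ N : Submodule R M, N ≠ ⊥ → K ⊓ N ≠ ⊥

/-- A module `M` is *singular* if the annihilator of every element of `M` is an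
essential ideal of `R`. -/
def IsSingularModule (R M : Type*) [Ring R] [AddCommGroup M] [Module R M] : Prop :=
  ∀ x : M, IsEssentialSubmodule (LinearMap.ker (LinearMap.toSpanSingleton R M x))

/-- A submodule `N` of `M` is *δ-small* in `M` if whenever `M = N + X` with `M/X`
singular, we have `X = M`. -/
def IsDeltaSmall (R : Type*) {M : Type*} [Ring R] [AddCommGroup M] [Module R M]
    (N : Submodule R M) : Prop :=
  ∀ X : Submodule R M, N ⊔ X = ⊤ → IsSingularModule R (M ⧸ X) → X = ⊤

/-!
If `mR + X = M` with `X ≠ M` and `M/X` singular, then `m ∉ X`. As `mR` is finitely generated,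
Zorn's lemma gives `N ⊇ X` maximal among the submodules avoiding `m`; every larger submodule
contains `mR + X = M`, so `N` is a maximal submodule, and `M/N` is singular as a quotient of
`M/X`. Conversely, a maximal `N ∌ m` satisfies `mR + N = M` with `N ≠ M`.
-/

theorem IsCompactElement.exists_le_isCoatom_of_sup_eq_top {α : Type*} [CompleteLattice α]
    {k b : α} (hk : IsCompactElement k) (hkb : k ⊔ b = ⊤) (hb : b ≠ ⊤) :
    ∃ c, IsCoatom c ∧ b ≤ c ∧ ¬ k ≤ c := by
  have hk_not_le_b : ¬ k ≤ b := fun h => hb (by rwa [sup_eq_right.2 h] at hkb)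
  have chains : ∀ S ⊆ {c | b ≤ c ∧ ¬ k ≤ c}, IsChain (· ≤ ·) S → ∀ c ∈ S,
      ∃ u ∈ {c | b ≤ c ∧ ¬ k ≤ c}, ∀ d ∈ S, d ≤ u := by
    intro S hS hchain c hc
    refine ⟨sSup S, ⟨(hS hc).1.trans (le_sSup hc), fun hk_le => ?_⟩, fun _ => le_sSup⟩
    obtain ⟨d, hd, hkd⟩ := (CompleteLattice.isCompactElement_iff_le_of_directed_sSup_le _ k).1
      hk S ⟨c, hc⟩ hchain.directedOn hk_le
    exact (hS hd).2 hkd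
  obtain ⟨c, hbc, hc⟩ := zorn_le_nonempty₀ _ chains b ⟨le_rfl, hk_not_le_b⟩
  refine ⟨c, ⟨fun hc_top => hc.prop.2 (hc_top ▸ le_top), fun d hcd => ?_⟩, hbc, hc.prop.2⟩
  have hkd : k ≤ d := by_contra fun h => hcd.not_ge (hc.2 ⟨hbc.trans hcd.le, h⟩ hcd.le)
  rw [← top_le_iff, ← hkb]
  exact sup_le hkd (hbc.trans hcd.le)

section

variable {R M N : Type*} [Ring R] [AddCommGroup M] [Module R M] [AddCommGroup N] [Module R N]

theorem IsEssentialSubmodule.mono {K K' : Submodule R M} (hK : IsEssentialSubmodule K)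
    (h : K ≤ K') : IsEssentialSubmodule K' :=
  fun L hL hK'L => hK L hL (eq_bot_iff.2 ((inf_le_inf_right L h).trans hK'L.le))

theorem IsSingularModule.of_surjective (hM : IsSingularModule R M) (f : M →ₗ[R] N)
    (hf : Function.Surjective f) : IsSingularModule R N := by
  intro y
  obtain ⟨x, rfl⟩ := hf y
  refine (hM x).mono fun r hr => ?_
  simp only [LinearMap.mem_ker, LinearMap.toSpanSingleton_apply] at hr ⊢
  rw [← map_smul, hr, map_zero]

end

theorem cyclic_not_deltaSmall_iff_exists_maximal
    {R M : Type*} [Ring R] [AddCommGroup M] [Module R M] (m : M) :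
    ¬ IsDeltaSmall R (Submodule.span R {m}) ↔
      ∃ N : Submodule R M, IsCoatom N ∧ m ∉ N ∧ IsSingularModule R (M ⧸ N) := by
  simp only [IsDeltaSmall, not_forall, exists_prop]
  constructor
  · rintro ⟨X, hsup, hsing, hX⟩
    obtain ⟨N, hN, hXN, hmN⟩ :=
      (Submodule.singleton_span_isCompactElement m).exists_le_isCoatom_of_sup_eq_top hsup hX
    refine ⟨N, hN, fun hm => hmN ((Submodule.span_singleton_le_iff_mem m N).2 hm), ?_⟩
    exact hsing.of_surjective _ (Submodule.factor_surjective hXN)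
  · rintro ⟨N, hN, hmN, hsing⟩
    have hmN' : ¬ Submodule.span R {m} ≤ N := by
      rwa [Submodule.span_singleton_le_iff_mem]
    exact ⟨N, codisjoint_iff.1 (hN.not_le_iff_codisjoint.1 hmN').symm, hsing, hN.ne_top⟩
end

section
/- Every direct summand of a principally δ-lifting right R-module is a principally δ-lifting module. -/
/-- A module `M` is *principally δ-lifting* if for each `m ∈ M` there is a
decomposition `M = A ⊕ B` with `A ≤ mR` and `mR ∩ B` δ-small in `B`. -/
def IsPrinDeltaLifting (R M : Type*) [Ring R] [AddCommGroup M] [Module R M] : Prop :=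
  ∀ m : M, ∃ A B : Submodule R M, A ≤ Submodule.span R {m} ∧ IsCompl A B ∧
    IsDeltaSmall R ((Submodule.span R {m} ⊓ B).comap B.subtype)

open Submodule

section DeltaSmall

variable {R M M' : Type*} [Ring R] [AddCommGroup M] [Module R M]
  [AddCommGroup M'] [Module R M']

theorem IsSingularModule.of_injective (f : M →ₗ[R] M') (hf : Function.Injective f)
    (h : IsSingularModule R M') : IsSingularModule R M := by
  intro x
  have hker : LinearMap.ker (LinearMap.toSpanSingleton R M x) =
      LinearMap.ker (LinearMap.toSpanSingleton R M' (f x)) := by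
    ext r
    simp only [LinearMap.mem_ker, LinearMap.toSpanSingleton_apply, ← map_smul,
      map_eq_zero_iff f hf]
  rw [hker]
  exact h _

theorem IsDeltaSmall.map {N : Submodule R M} (hN : IsDeltaSmall R N) (f : M →ₗ[R] M') :
    IsDeltaSmall R (N.map f) := by
  intro X hX hsing
  have hsup : N ⊔ X.comap f = ⊤ := by
    refine eq_top_iff.2 fun x _ => ?_
    have hfx : f x ∈ N.map f ⊔ X := hX ▸ mem_top
    obtain ⟨_, ⟨n, hn, rfl⟩, z, hz, hnz⟩ := mem_sup.1 hfx
    refine mem_sup.2 ⟨n, hn, x - n, ?_, add_sub_cancel _ _⟩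
    rwa [mem_comap, map_sub, ← hnz, add_sub_cancel_left]
  have hsing' : IsSingularModule R (M ⧸ X.comap f) :=
    hsing.of_injective (mapQ _ X f le_rfl) <| by
      rw [← LinearMap.ker_eq_bot, ker_mapQ, mkQ_map_self]
  have hle : N.map f ≤ X :=
    (map_mono le_top).trans (map_le_iff_le_comap.2 (hN _ hsup hsing').ge)
  rwa [sup_eq_right.2 hle] at hX

theorem IsDeltaSmall.comap_of_leftInverse {N : Submodule R M} (hN : IsDeltaSmall R N)
    {i : M' →ₗ[R] M} (r : M →ₗ[R] M') (hri : Function.LeftInverse r i)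
    (hNi : N ≤ LinearMap.range i) : IsDeltaSmall R (N.comap i) := by
  have hmap : N.map r = N.comap i := by
    ext y
    constructor
    · rintro ⟨x, hx, rfl⟩
      obtain ⟨z, rfl⟩ := hNi hx
      rwa [mem_comap, hri z]
    · intro hy
      exact ⟨i y, hy, hri y⟩
  exact hmap ▸ hN.map r

theorem Submodule.comap_subtype_span_singleton (K : Submodule R M) (m : K) :
    (span R {(m : M)}).comap K.subtype = span R {m} := by
  rw [← K.subtype_apply, ← Set.image_singleton, ← map_span,
    comap_map_eq_of_injective K.injective_subtype]

end DeltaSmall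

theorem directSummand_isPrinDeltaLifting
    {R M : Type*} [Ring R] [AddCommGroup M] [Module R M]
    (hM : IsPrinDeltaLifting R M) (K K' : Submodule R M) (hK : IsCompl K K') :
    IsPrinDeltaLifting R K := by
  intro m
  obtain ⟨A, B, hAm, hAB, hδ⟩ := hM m
  have hmK : span R {(m : M)} ≤ K := (span_singleton_le_iff_mem _ _).2 m.2
  set B' := B.comap K.subtype
  have hAB' : IsCompl (A.comap K.subtype) B' :=
    isCompl_comap_subtype_of_isCompl_of_le hAB (hAm.trans hmK)
  refine ⟨A.comap K.subtype, B', K.comap_subtype_span_singleton m ▸ comap_mono hAm, hAB', ?_⟩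
  let i : B' →ₗ[R] B := (K.subtype ∘ₗ B'.subtype).codRestrict B fun y => y.2
  let r : B →ₗ[R] B' := B'.projectionOnto _ hAB'.symm ∘ₗ K.projectionOnto K' hK ∘ₗ B.subtype
  have hri : Function.LeftInverse r i := fun y => by
    change B'.projectionOnto _ _ (K.projectionOnto K' hK ((y : K) : M)) = y
    rw [projectionOnto_apply_left, projectionOnto_apply_left]
  have hrange : (span R {(m : M)} ⊓ B).comap B.subtype ≤ LinearMap.range i :=
    fun x hx => ⟨⟨⟨x, hmK hx.1⟩, x.2⟩, rfl⟩
  have hcomap : ((span R {(m : M)} ⊓ B).comap B.subtype).comap i =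
      (span R {m} ⊓ B').comap B'.subtype := by
    ext y
    simp only [mem_comap, ← K.comap_subtype_span_singleton, mem_inf]
    exact and_congr_right fun _ => iff_of_true y.2 y.2
  exact hcomap ▸ hδ.comap_of_leftInverse r hri hrange
end

section
/- A right R-module M is principally δ-lifting if and only if for every cyclic submodule C of M there is a direct summand A of M with A ⊆ C such that C/A is δ-small in M/A. -/
/-! A complement `B` of `A` is isomorphic to `M ⧸ A`, and since `A ≤ mR` the modular law
`A ⊔ (mR ⊓ B) = mR` shows that this isomorphism carries `mR ⊓ B` onto the image of `mR` in
`M ⧸ A`. δ-smallness is invariant under isomorphism, so the two conditions agree. -/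

section LinearEquiv

variable {R M N : Type*} [Ring R] [AddCommGroup M] [Module R M] [AddCommGroup N] [Module R N]

theorem IsSingularModule.of_linearEquiv (e : M ≃ₗ[R] N) (h : IsSingularModule R M) :
    IsSingularModule R N := by
  intro x
  have hcomp : (e : M →ₗ[R] N) ∘ₗ LinearMap.toSpanSingleton R M (e.symm x) =
      LinearMap.toSpanSingleton R N x := by
    ext; simp
  rw [← hcomp, LinearEquiv.ker_comp]
  exact h _

theorem IsDeltaSmall.map_linearEquiv {K : Submodule R M} (h : IsDeltaSmall R K)
    (e : M ≃ₗ[R] N) : IsDeltaSmall R (K.map (e : M →ₗ[R] N)) := by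
  intro X hKX hX
  have hX_eq : (X.map (e.symm : N →ₗ[R] M)).map (e : M →ₗ[R] N) = X :=
    (Submodule.map_symm_eq_iff e).mp rfl
  have hsup : K ⊔ X.map (e.symm : N →ₗ[R] M) = ⊤ := by
    simpa [Submodule.map_sup, ← Submodule.map_comp] using
      congrArg (Submodule.map (e.symm : N →ₗ[R] M)) hKX
  have htop := h _ hsup (hX.of_linearEquiv (Submodule.Quotient.equiv _ X e hX_eq).symm)
  rw [← hX_eq, htop, Submodule.map_top, LinearEquiv.range]

theorem isDeltaSmall_map_linearEquiv_iff (K : Submodule R M) (e : M ≃ₗ[R] N) :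
    IsDeltaSmall R (K.map (e : M →ₗ[R] N)) ↔ IsDeltaSmall R K := by
  refine ⟨fun h => ?_, fun h => h.map_linearEquiv e⟩
  simpa [← Submodule.map_comp] using h.map_linearEquiv e.symm

end LinearEquiv

section IsCompl

variable {R M : Type*} [Ring R] [AddCommGroup M] [Module R M]

theorem map_quotientEquivOfIsCompl_symm_comap_subtype_inf {A B C : Submodule R M}
    (hAB : IsCompl A B) (hAC : A ≤ C) :
    ((C ⊓ B).comap B.subtype).map ((A.quotientEquivOfIsCompl B hAB).symm : B →ₗ[R] M ⧸ A) =
      C.map A.mkQ := by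
  have hcomp : ((A.quotientEquivOfIsCompl B hAB).symm : B →ₗ[R] M ⧸ A) = A.mkQ ∘ₗ B.subtype := by
    ext; simp
  have hmodular : A ⊔ C ⊓ B = C := by
    rw [inf_comm, ← sup_inf_assoc_of_le _ hAC, hAB.sup_eq_top, top_inf_eq]
  calc _ = (C ⊓ B).map A.mkQ := by
          rw [hcomp, Submodule.map_comp, Submodule.map_comap_subtype, inf_of_le_right inf_le_right]
    _ = (A ⊔ C ⊓ B).map A.mkQ := by rw [Submodule.map_sup, Submodule.mkQ_map_self, bot_sup_eq]
    _ = C.map A.mkQ := by rw [hmodular]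

theorem isDeltaSmall_comap_subtype_inf_iff {A B C : Submodule R M} (hAB : IsCompl A B)
    (hAC : A ≤ C) :
    IsDeltaSmall R ((C ⊓ B).comap B.subtype) ↔ IsDeltaSmall R (C.map A.mkQ) := by
  rw [← map_quotientEquivOfIsCompl_symm_comap_subtype_inf hAB hAC,
    isDeltaSmall_map_linearEquiv_iff]

end IsCompl

theorem isPrinDeltaLifting_iff_quotient_deltaSmall
    {R M : Type*} [Ring R] [AddCommGroup M] [Module R M] :
    IsPrinDeltaLifting R M ↔
      ∀ m : M, ∃ A : Submodule R M, (∃ A' : Submodule R M, IsCompl A A') ∧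
        A ≤ Submodule.span R {m} ∧
        IsDeltaSmall R ((Submodule.span R {m}).map A.mkQ) := by
  refine forall_congr' fun m => ⟨?_, ?_⟩
  · rintro ⟨A, B, hAm, hAB, hsmall⟩
    exact ⟨A, ⟨B, hAB⟩, hAm, (isDeltaSmall_comap_subtype_inf_iff hAB hAm).mp hsmall⟩
  · rintro ⟨A, ⟨B, hAB⟩, hAm, hsmall⟩
    exact ⟨A, B, hAm, hAB, (isDeltaSmall_comap_subtype_inf_iff hAB hAm).mpr hsmall⟩
end

section
/- A right R-module M is principally δ-lifting if and only if for every cyclic submodule C of M there is an idempotent e in the endomorphism ring End(M) such that e(M) ⊆ C and (1−e)(C) is δ-small in (1−e)(M). -/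
/-!
Idempotents `e` of `End(M)` correspond to decompositions `M = e(M) ⊕ ker e`, with
`(1 - e)(M) = ker e`. If moreover `e(M) ⊆ C`, then every `c ∈ C` splits as
`e c + (1 - e) c` with both summands in `C`, so `(1 - e)(C) = C ∩ ker e`. Thus the
idempotent condition for `C = mR` is literally the δ-lifting condition for the
decomposition `M = e(M) ⊕ ker e`, and conversely a decomposition `M = A ⊕ B` yields
the projection onto `A` along `B`.
-/

namespace LinearMap.IsIdempotentElem

variable {R M : Type*} [Ring R] [AddCommGroup M] [Module R M]
  {e : Module.End R M} {C : Submodule R M}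

theorem map_one_sub_eq_inf_ker (he : IsIdempotentElem e) (hC : range e ≤ C) :
    C.map (1 - e) = C ⊓ ker e := by
  ext x
  constructor
  · rintro ⟨c, hc, rfl⟩
    refine ⟨C.sub_mem hc (hC ⟨c, rfl⟩), ?_⟩
    rw [ker_eq_range_one_sub he]
    exact ⟨c, rfl⟩
  · rintro ⟨hxC, hxe⟩
    exact ⟨x, hxC, by simp [mem_ker.mp hxe]⟩

theorem isDeltaSmall_map_one_sub_iff (he : IsIdempotentElem e) (hC : range e ≤ C) :
    IsDeltaSmall R ((C.map (1 - e)).comap (range (1 - e)).subtype) ↔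
      IsDeltaSmall R ((C ⊓ ker e).comap (ker e).subtype) := by
  rw [← ker_eq_range_one_sub he, map_one_sub_eq_inf_ker he hC]

end LinearMap.IsIdempotentElem

theorem isPrinDeltaLifting_iff_idempotent
    {R M : Type*} [Ring R] [AddCommGroup M] [Module R M] :
    IsPrinDeltaLifting R M ↔
      ∀ m : M, ∃ e : Module.End R M, IsIdempotentElem e ∧
        LinearMap.range e ≤ Submodule.span R {m} ∧
        IsDeltaSmall R
          (((Submodule.span R {m}).map (1 - e)).comap (LinearMap.range (1 - e)).subtype) := by
  constructor
  · intro h m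
    obtain ⟨A, B, hA, hAB, hsmall⟩ := h m
    have he := Submodule.isIdempotentElem_projection hAB
    have hrange : LinearMap.range (A.projection B hAB) ≤ Submodule.span R {m} :=
      (Submodule.range_projection hAB).trans_le hA
    refine ⟨A.projection B hAB, he, hrange, ?_⟩
    rwa [LinearMap.IsIdempotentElem.isDeltaSmall_map_one_sub_iff he hrange,
      Submodule.ker_projection]
  · intro h m
    obtain ⟨e, he, hrange, hsmall⟩ := h m
    exact ⟨LinearMap.range e, LinearMap.ker e, hrange, LinearMap.IsIdempotentElem.isCompl he,
      (LinearMap.IsIdempotentElem.isDeltaSmall_map_one_sub_iff he hrange).mp hsmall⟩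
end
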